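/- arXiv:1401.3557 — 7 statements merged into one kernel-verified Lean document; each statement's English description precedes it below -/
import Mathlib

section
/- Let X be a type, let a, w be permutations of X, and let Y ⊆ X be a subset with a(Y) = Y (a maps Y onto itself). If the support of w is contained in Y and a·w·a = w·a·w (the braid relation), then the support of a is contained in Y. -/
/-- Observation 2: if a permutation `a` preserves a set `Y`, the support of `w` is
contained in `Y`, and `a` and `w` satisfy the braid relation, then the support of `a`
is contained in `Y`. -/
theorem support_subset_of_braid {X : Type*} (a w : Equiv.Perm X) (Y : Set X)
    (haY : a '' Y = Y) (hw : {x : X | w x ≠ x} ⊆ Y)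
    (hbraid : a * w * a = w * a * w) : {x : X | a x ≠ x} ⊆ Y := by
  intro x hx
  by_contra hxY
  have hwx : w x = x := by
    by_contra h; exact hxY (hw h)
  have haxY : a x ∉ Y := by
    intro h
    rw [← haY] at h
    obtain ⟨y, hy, hay⟩ := h
    exact hxY (a.injective hay ▸ hy)
  have hwax : w (a x) = a x := by
    by_contra h; exact haxY (hw h)
  have := congrArg (fun p : Equiv.Perm X => p x) hbraid
  simp only [Equiv.Perm.mul_apply, hwx, hwax] at this
  exact hx (a.injective this)
end

section
/- Let X be a finite type and let H be a subgroup of the group of permutations of X such that the H-orbits on X are exactly four sets: three of cardinality k and one of cardinality l, with k ≠ l. Assume that for every H-orbit O and every permutation ρ of O that commutes with the restriction to O of every element of H, ρ is the identity. Then the centralizer of H in Perm(X) has at most 6 elements. -/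
/-- `O` is an orbit of the subgroup `H ≤ Perm X` acting naturally on `X`. -/
def IsPermOrbit {X : Type*} (H : Subgroup (Equiv.Perm X)) (O : Set X) : Prop :=
  ∃ x : X, O = MulAction.orbit H x

/-- If the `H`-orbits are exactly four sets, three of cardinality `k` and one of
cardinality `l` with `k ≠ l`, and on each orbit the only permutation commuting with the
restricted action of `H` is the identity, then the centralizer of `H` in `Perm X` has at
most `6` elements. -/
theorem card_centralizer_le_six {X : Type*} [Finite X]
    (H : Subgroup (Equiv.Perm X)) (k l : ℕ) (hkl : k ≠ l)
    (O₁ O₂ O₃ O₄ : Set X)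
    (hne : O₁ ≠ O₂ ∧ O₁ ≠ O₃ ∧ O₁ ≠ O₄ ∧ O₂ ≠ O₃ ∧ O₂ ≠ O₄ ∧ O₃ ≠ O₄)
    (horbits : {O : Set X | IsPermOrbit H O} = {O₁, O₂, O₃, O₄})
    (hcard : O₁.ncard = k ∧ O₂.ncard = k ∧ O₃.ncard = k ∧ O₄.ncard = l)
    (hfaith : ∀ O : Set X, IsPermOrbit H O → ∀ ρ : Equiv.Perm X,
      {x : X | ρ x ≠ x} ⊆ O → (∀ h ∈ H, ∀ x ∈ O, ρ (h x) = h (ρ x)) → ρ = 1) :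
    Nat.card (Subgroup.centralizer (H : Set (Equiv.Perm X))) ≤ 6 := by
  classical
  obtain ⟨h12, h13, h14, h23, h24, h34⟩ := hne
  obtain ⟨hc1, hc2, hc3, hc4⟩ := hcard
  set C := Subgroup.centralizer (H : Set (Equiv.Perm X)) with hC
  -- commuting formula
  have hcomm : ∀ ρ ∈ C, ∀ h ∈ H, ∀ x : X, ρ (h x) = h (ρ x) := by
    intro ρ hρ h hh x
    have h1 : h * ρ = ρ * h := (Subgroup.mem_centralizer_iff.mp hρ) h hh
    have := congrFun (congrArg (fun e : Equiv.Perm X => (e : X → X)) h1) x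
    simpa [Equiv.Perm.mul_apply] using this.symm
  -- orbits are invariant under H
  have hinv : ∀ O : Set X, IsPermOrbit H O → ∀ h ∈ H, ∀ x ∈ O, h x ∈ O := by
    rintro O ⟨y, rfl⟩ h hh x hx
    obtain ⟨g, hg⟩ := MulAction.mem_orbit_iff.mp hx
    refine MulAction.mem_orbit_iff.mpr ⟨(⟨h, hh⟩ : H) * g, ?_⟩
    rw [mul_smul, hg]
    rfl
  -- image of an orbit is an orbit
  have himg : ∀ ρ ∈ C, ∀ O : Set X, IsPermOrbit H O → IsPermOrbit H (ρ '' O) := by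
    rintro ρ hρ O ⟨x, rfl⟩
    refine ⟨ρ x, Set.ext fun y => ?_⟩
    simp only [Set.mem_image, MulAction.mem_orbit_iff]
    constructor
    · rintro ⟨z, ⟨g, rfl⟩, rfl⟩
      refine ⟨g, ?_⟩
      show (g : Equiv.Perm X) (ρ x) = ρ ((g : Equiv.Perm X) x)
      exact (hcomm ρ hρ g g.2 x).symm
    · rintro ⟨g, rfl⟩
      refine ⟨(g : Equiv.Perm X) x, ⟨g, rfl⟩, ?_⟩
      exact hcomm ρ hρ g g.2 x
  -- each Oᵢ is an orbit
  have horb : ∀ O ∈ ({O₁, O₂, O₃, O₄} : Set (Set X)), IsPermOrbit H O := by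
    intro O hO
    have : O ∈ {O : Set X | IsPermOrbit H O} := horbits ▸ hO
    exact this
  have horb1 : IsPermOrbit H O₁ := horb O₁ (by simp)
  have horb2 : IsPermOrbit H O₂ := horb O₂ (by simp)
  have horb3 : IsPermOrbit H O₃ := horb O₃ (by simp)
  have horb4 : IsPermOrbit H O₄ := horb O₄ (by simp)
  -- a centralizing permutation fixing an orbit setwise fixes it pointwise
  have hfix : ∀ σ ∈ C, ∀ O : Set X, IsPermOrbit H O → σ '' O = O → ∀ x ∈ O, σ x = x := by
    intro σ hσ O hO hOO x hx
    have hiff : ∀ y : X, y ∈ O ↔ σ y ∈ O := by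
      intro y
      constructor
      · intro hy; rw [← hOO]; exact ⟨y, hy, rfl⟩
      · intro hy
        rw [← hOO] at hy
        obtain ⟨z, hz, hzz⟩ := hy
        rwa [σ.injective hzz] at hz
    set ρ := Equiv.Perm.ofSubtype (σ.subtypePerm (fun y => (hiff y).symm)) with hρdef
    have hρ1 : ρ = 1 := by
      apply hfaith O hO
      · intro y hy
        by_contra hyO
        exact hy (Equiv.Perm.ofSubtype_apply_of_not_mem (σ.subtypePerm (fun y => (hiff y).symm)) hyO)
      · intro h hh y hy
        have hyO : h y ∈ O := hinv O hO h hh y hy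
        rw [hρdef, Equiv.Perm.ofSubtype_apply_of_mem _ hyO,
          Equiv.Perm.ofSubtype_apply_of_mem _ hy]
        exact hcomm σ hσ h hh y
    have := congrArg (fun e : Equiv.Perm X => e x) hρ1
    simpa [hρdef, Equiv.Perm.ofSubtype_apply_of_mem _ hx] using this
  -- indexing the three k-orbits
  set Os : Fin 3 → Set X := ![O₁, O₂, O₃] with hOs
  have hOs0 : Os 0 = O₁ := rfl
  have hOs1 : Os 1 = O₂ := rfl
  have hOs2 : Os 2 = O₃ := rfl
  have hOsinj : Function.Injective Os := by
    intro i j hij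
    fin_cases i <;> fin_cases j <;>
      first
        | rfl
        | exact absurd (hij : O₁ = O₂) h12
        | exact absurd (hij : O₁ = O₃) h13
        | exact absurd (hij : O₂ = O₃) h23
        | exact absurd ((hij : O₂ = O₁).symm) h12
        | exact absurd ((hij : O₃ = O₁).symm) h13
        | exact absurd ((hij : O₃ = O₂).symm) h23
  have hOsorb : ∀ i, IsPermOrbit H (Os i) := by
    intro i
    fin_cases i
    · exact horb1
    · exact horb2
    · exact horb3
  have hOscard : ∀ i, (Os i).ncard = k := by
    intro i
    fin_cases i
    · exact hc1
    · exact hc2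
    · exact hc3
  -- image of a k-orbit is a k-orbit
  have hex : ∀ ρ ∈ C, ∀ i : Fin 3, ∃ j : Fin 3, ρ '' Os i = Os j := by
    intro ρ hρ i
    have h1 : IsPermOrbit H (ρ '' Os i) := himg ρ hρ _ (hOsorb i)
    have h2 : ρ '' Os i ∈ ({O₁, O₂, O₃, O₄} : Set (Set X)) := horbits ▸ h1
    have h3 : (ρ '' Os i).ncard = k := by
      rw [Set.ncard_image_of_injective _ ρ.injective, hOscard]
    rcases h2 with h | h | h | h
    · exact ⟨0, by rw [hOs0]; exact h⟩
    · exact ⟨1, by rw [hOs1]; exact h⟩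
    · exact ⟨2, by rw [hOs2]; exact h⟩
    · exact absurd (by rw [← h3, h, hc4]) hkl
  -- image of the l-orbit is itself
  have hexl : ∀ ρ ∈ C, ρ '' O₄ = O₄ := by
    intro ρ hρ
    have h1 : IsPermOrbit H (ρ '' O₄) := himg ρ hρ _ horb4
    have h2 : ρ '' O₄ ∈ ({O₁, O₂, O₃, O₄} : Set (Set X)) := horbits ▸ h1
    have h3 : (ρ '' O₄).ncard = l := by
      rw [Set.ncard_image_of_injective _ ρ.injective, hc4]
    rcases h2 with h | h | h | h
    · exact absurd (by rw [← h3, h, hc1]) (Ne.symm hkl)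
    · exact absurd (by rw [← h3, h, hc2]) (Ne.symm hkl)
    · exact absurd (by rw [← h3, h, hc3]) (Ne.symm hkl)
    · exact h
  -- the function induced by ρ on the indices
  let f : C → Fin 3 → Fin 3 := fun ρ i => (hex ρ ρ.2 i).choose
  have hfspec : ∀ ρ : C, ∀ i : Fin 3, (ρ : Equiv.Perm X) '' Os i
      = Os (f ρ i) := fun ρ i => (hex ρ ρ.2 i).choose_spec
  have hfinj : ∀ ρ : C, Function.Injective (f ρ) := by
    intro ρ i j hij
    apply hOsinj
    have h1 := hfspec ρ i
    have h2 := hfspec ρ j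
    rw [hij] at h1
    rw [← h2] at h1
    exact Set.image_injective.mpr (ρ : Equiv.Perm X).injective h1
  let θ : C → Equiv.Perm (Fin 3) := fun ρ =>
    Equiv.ofBijective (f ρ) (Finite.injective_iff_bijective.mp (hfinj ρ))
  have hθinj : Function.Injective θ := by
    intro ρ ρ' hρρ
    have hff : f ρ = f ρ' :=
      funext fun i => (congrArg (fun e : Equiv.Perm (Fin 3) => e i) hρρ : f ρ i = f ρ' i)
    -- the images of the orbits agree
    have himgs : ∀ i : Fin 3, (ρ : Equiv.Perm X) '' Os i = (ρ' : Equiv.Perm X) '' Os i := by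
      intro i
      rw [hfspec ρ i, hfspec ρ' i, hff]
    set σ : Equiv.Perm X := (ρ' : Equiv.Perm X)⁻¹ * (ρ : Equiv.Perm X) with hσdef
    have hσC : σ ∈ C := C.mul_mem (C.inv_mem ρ'.2) ρ.2
    have hσimg : ∀ O : Set X, (ρ : Equiv.Perm X) '' O = (ρ' : Equiv.Perm X) '' O →
        σ '' O = O := by
      intro O hO
      have h1 : (ρ' : Equiv.Perm X) '' (σ '' O) = (ρ : Equiv.Perm X) '' O := by
        rw [← Set.image_comp]
        apply Set.image_congr'
        intro y
        simp [hσdef]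
      have h2 : (ρ' : Equiv.Perm X) '' (σ '' O) = (ρ' : Equiv.Perm X) '' O := by
        rw [h1, hO]
      exact Set.image_injective.mpr (ρ' : Equiv.Perm X).injective h2
    have hσOs : ∀ i : Fin 3, σ '' Os i = Os i := fun i => hσimg _ (himgs i)
    have hσO4 : σ '' O₄ = O₄ := hσimg _ (by rw [hexl ρ ρ.2, hexl ρ' ρ'.2])
    -- σ is the identity
    have hσ1 : σ = 1 := by
      ext x
      have hxorb : x ∈ MulAction.orbit H x := MulAction.mem_orbit_self x
      have hxmem : MulAction.orbit H x ∈ ({O₁, O₂, O₃, O₄} : Set (Set X)) :=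
        horbits ▸ (⟨x, rfl⟩ : IsPermOrbit H (MulAction.orbit H x))
      have : σ x = x := by
        rcases hxmem with h | h | h | h
        · exact hfix σ hσC O₁ horb1 (by rw [← hOs0]; exact hσOs 0) x (h ▸ hxorb)
        · exact hfix σ hσC O₂ horb2 (by rw [← hOs1]; exact hσOs 1) x (h ▸ hxorb)
        · exact hfix σ hσC O₃ horb3 (by rw [← hOs2]; exact hσOs 2) x (h ▸ hxorb)
        · exact hfix σ hσC O₄ horb4 hσO4 x (h ▸ hxorb)
      simpa using this
    have : (ρ' : Equiv.Perm X) = (ρ : Equiv.Perm X) := by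
      have := congrArg (fun e => (ρ' : Equiv.Perm X) * e) hσ1
      simpa [hσdef, mul_assoc] using this.symm
    exact Subtype.ext this.symm
  calc Nat.card C ≤ Nat.card (Equiv.Perm (Fin 3)) := Nat.card_le_card_of_injective θ hθinj
    _ = 6 := by rw [Nat.card_eq_fintype_card, Fintype.card_perm, Fintype.card_fin]; rfl
end

section
/- In the symmetric group S₁₀, the centralizer of the set {(3 5)(6 8)(9 10), (2 3)(4 6)(7 9), (2 4)(3 6)(5 8)} is the two-element set {id, (2 4)(3 6)(5 8)}. -/
open Equiv

private def pa : Equiv.Perm (Fin 10) := swap 2 4 * swap 5 7 * swap 8 9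
private def pb : Equiv.Perm (Fin 10) := swap 1 2 * swap 3 5 * swap 6 8
private def pc : Equiv.Perm (Fin 10) := swap 1 3 * swap 2 5 * swap 4 7

/-- In `S₁₀`, the centralizer of `{(3 5)(6 8)(9 10), (2 3)(4 6)(7 9), (2 4)(3 6)(5 8)}`
is `{id, (2 4)(3 6)(5 8)}` (elements of `{1,…,10}` are encoded as `0,…,9 : Fin 10`). -/
theorem centralizer_S10_a :
    Set.centralizer
      ({swap 2 4 * swap 5 7 * swap 8 9,
        swap 1 2 * swap 3 5 * swap 6 8,
        swap 1 3 * swap 2 5 * swap 4 7} : Set (Equiv.Perm (Fin 10))) =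
      {1, swap 1 3 * swap 2 5 * swap 4 7} := by
  ext g
  simp only [Set.mem_centralizer_iff, Set.mem_insert_iff, Set.mem_singleton_iff]
  constructor
  · intro h
    have hA : pa * g = g * pa := h _ (Or.inl rfl)
    have hB : pb * g = g * pb := h _ (Or.inr (Or.inl rfl))
    have hC : pc * g = g * pc := h _ (Or.inr (Or.inr rfl))
    have ha : ∀ x, pa (g x) = g (pa x) := fun x => by
      have := DFunLike.congr_fun hA x; simpa [Perm.mul_apply] using this
    have hb : ∀ x, pb (g x) = g (pb x) := fun x => by
      have := DFunLike.congr_fun hB x; simpa [Perm.mul_apply] using this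
    have hc : ∀ x, pc (g x) = g (pc x) := fun x => by
      have := DFunLike.congr_fun hC x; simpa [Perm.mul_apply] using this
    have d0 : ∀ x : Fin 10, pa x = x → pb x = x → pc x = x → x = 0 := by decide
    have dv : ∀ x : Fin 10, pa x = x → pc x = x → x = 0 ∨ x = 6 := by decide
    have du : ∀ x : Fin 10, pa x = x → x = 0 ∨ x = 1 ∨ x = 3 ∨ x = 6 := by decide
    have h0 : g 0 = 0 := by
      refine d0 _ ?_ ?_ ?_
      · have := ha 0; rwa [show pa 0 = 0 by decide] at this
      · have := hb 0; rwa [show pb 0 = 0 by decide] at this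
      · have := hc 0; rwa [show pc 0 = 0 by decide] at this
    have h6 : g 6 = 6 := by
      have h6' : g 6 = 0 ∨ g 6 = 6 := by
        refine dv _ ?_ ?_
        · have := ha 6; rwa [show pa 6 = 6 by decide] at this
        · have := hc 6; rwa [show pc 6 = 6 by decide] at this
      rcases h6' with h' | h'
      · exact absurd (g.injective (h'.trans h0.symm)) (by decide)
      · exact h'
    have hu : g 1 = 1 ∨ g 1 = 3 := by
      have hu' : g 1 = 0 ∨ g 1 = 1 ∨ g 1 = 3 ∨ g 1 = 6 := by
        refine du _ ?_
        have := ha 1; rwa [show pa 1 = 1 by decide] at this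
      rcases hu' with h' | h' | h' | h'
      · exact absurd (g.injective (h'.trans h0.symm)) (by decide)
      · exact Or.inl h'
      · exact Or.inr h'
      · exact absurd (g.injective (h'.trans h6.symm)) (by decide)
    have e2 : g 2 = pb (g 1) := by have := hb 1; rw [show pb 1 = 2 by decide] at this; exact this.symm
    have e3 : g 3 = pc (g 1) := by have := hc 1; rw [show pc 1 = 3 by decide] at this; exact this.symm
    have e4 : g 4 = pa (g 2) := by have := ha 2; rw [show pa 2 = 4 by decide] at this; exact this.symm
    have e5 : g 5 = pb (g 3) := by have := hb 3; rw [show pb 3 = 5 by decide] at this; exact this.symm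
    have e7 : g 7 = pc (g 4) := by have := hc 4; rw [show pc 4 = 7 by decide] at this; exact this.symm
    have e8 : g 8 = pb (g 6) := by have := hb 6; rw [show pb 6 = 8 by decide] at this; exact this.symm
    have e9 : g 9 = pa (g 8) := by have := ha 8; rw [show pa 8 = 9 by decide] at this; exact this.symm
    have v8 : g 8 = 8 := by rw [e8, h6]; decide
    have v9 : g 9 = 9 := by rw [e9, v8]; decide
    rcases hu with h1 | h1
    · left
      have v2 : g 2 = 2 := by rw [e2, h1]; decide
      have v3 : g 3 = 3 := by rw [e3, h1]; decide
      have v4 : g 4 = 4 := by rw [e4, v2]; decide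
      have v5 : g 5 = 5 := by rw [e5, v3]; decide
      have v7 : g 7 = 7 := by rw [e7, v4]; decide
      have dall : ∀ x : Fin 10, x = 0 ∨ x = 1 ∨ x = 2 ∨ x = 3 ∨ x = 4 ∨ x = 5 ∨
          x = 6 ∨ x = 7 ∨ x = 8 ∨ x = 9 := by decide
      ext x
      rcases dall x with rfl|rfl|rfl|rfl|rfl|rfl|rfl|rfl|rfl|rfl <;>
        first
          | (rw [h0]; rfl) | (rw [h1]; rfl) | (rw [v2]; rfl)
          | (rw [v3]; rfl) | (rw [v4]; rfl) | (rw [v5]; rfl)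
          | (rw [h6]; rfl) | (rw [v7]; rfl) | (rw [v8]; rfl)
          | (rw [v9]; rfl)
    · right
      have v2 : g 2 = 5 := by rw [e2, h1]; decide
      have v3 : g 3 = 1 := by rw [e3, h1]; decide
      have v4 : g 4 = 7 := by rw [e4, v2]; decide
      have v5 : g 5 = 2 := by rw [e5, v3]; decide
      have v7 : g 7 = 4 := by rw [e7, v4]; decide
      have dall : ∀ x : Fin 10, x = 0 ∨ x = 1 ∨ x = 2 ∨ x = 3 ∨ x = 4 ∨ x = 5 ∨
          x = 6 ∨ x = 7 ∨ x = 8 ∨ x = 9 := by decide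
      ext x
      rcases dall x with rfl|rfl|rfl|rfl|rfl|rfl|rfl|rfl|rfl|rfl <;>
        first
          | (rw [h0]; decide) | (rw [h1]; decide) | (rw [v2]; decide)
          | (rw [v3]; decide) | (rw [v4]; decide) | (rw [v5]; decide)
          | (rw [h6]; decide) | (rw [v7]; decide) | (rw [v8]; decide)
          | (rw [v9]; decide)
  · intro h m hm
    rcases h with h | h <;> subst h
    · simp
    · rcases hm with hm | hm | hm <;> subst hm <;> decide
end

section
/- In the symmetric group S₁₀, the centralizer of the set {(4 7)(6 9)(8 10), (3 5)(6 8)(9 10), (2 3)(4 6)(7 9), (1 2)(6 10)(8 9)} is the two-element set {id, (4 7)(6 9)(8 10)}. -/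
open Equiv

private abbrev t1 : Equiv.Perm (Fin 10) := swap 3 6 * swap 5 8 * swap 7 9
private abbrev t2 : Equiv.Perm (Fin 10) := swap 2 4 * swap 5 7 * swap 8 9
private abbrev t3 : Equiv.Perm (Fin 10) := swap 1 2 * swap 3 5 * swap 6 8
private abbrev t4 : Equiv.Perm (Fin 10) := swap 0 1 * swap 5 9 * swap 7 8

private lemma key0 : ∀ a : Fin 10, t1 a = a → t2 a = a → t3 a = a → a = 0 := by decide

private lemma key3 : ∀ a : Fin 10, t2 a = a → t4 a = a → a = 3 ∨ a = 6 := by decide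

/-- In `S₁₀`, the centralizer of
`{(4 7)(6 9)(8 10), (3 5)(6 8)(9 10), (2 3)(4 6)(7 9), (1 2)(6 10)(8 9)}`
is `{id, (4 7)(6 9)(8 10)}` (elements of `{1,…,10}` are encoded as `0,…,9 : Fin 10`). -/
theorem centralizer_S10_b :
    Set.centralizer
      ({swap 3 6 * swap 5 8 * swap 7 9,
        swap 2 4 * swap 5 7 * swap 8 9,
        swap 1 2 * swap 3 5 * swap 6 8,
        swap 0 1 * swap 5 9 * swap 7 8} : Set (Equiv.Perm (Fin 10))) =
      {1, swap 3 6 * swap 5 8 * swap 7 9} := by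
  ext g
  rw [Set.mem_centralizer_iff]
  constructor
  · intro hg
    have h1 := hg t1 (by simp [Set.mem_insert_iff])
    have h2 := hg t2 (by simp [Set.mem_insert_iff])
    have h3 := hg t3 (by simp [Set.mem_insert_iff])
    have h4 := hg t4 (by simp [Set.mem_insert_iff])
    have e1 : ∀ x, t1 (g x) = g (t1 x) := fun x => by
      rw [← Perm.mul_apply, ← Perm.mul_apply, h1]
    have e2 : ∀ x, t2 (g x) = g (t2 x) := fun x => by
      rw [← Perm.mul_apply, ← Perm.mul_apply, h2]
    have e3 : ∀ x, t3 (g x) = g (t3 x) := fun x => by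
      rw [← Perm.mul_apply, ← Perm.mul_apply, h3]
    have e4 : ∀ x, t4 (g x) = g (t4 x) := fun x => by
      rw [← Perm.mul_apply, ← Perm.mul_apply, h4]
    have c1 := e1 0; have c2 := e2 0; have c3 := e3 0
    have ht10 : t1 (0 : Fin 10) = 0 := by decide
    have ht20 : t2 (0 : Fin 10) = 0 := by decide
    have ht30 : t3 (0 : Fin 10) = 0 := by decide
    rw [ht10] at c1; rw [ht20] at c2; rw [ht30] at c3
    have h0 : g 0 = 0 := key0 _ c1 c2 c3
    have ha : g 1 = 1 := by
      have := e4 0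
      have ht : t4 (0 : Fin 10) = 1 := by decide
      rw [ht, h0] at this
      rw [← this]; decide
    have hb : g 2 = 2 := by
      have := e3 1
      have ht : t3 (1 : Fin 10) = 2 := by decide
      rw [ht, ha] at this
      rw [← this]; decide
    have hc : g 4 = 4 := by
      have := e2 2
      have ht : t2 (2 : Fin 10) = 4 := by decide
      rw [ht, hb] at this
      rw [← this]; decide
    have d2 := e2 3; have d4 := e4 3
    have ht23 : t2 (3 : Fin 10) = 3 := by decide
    have ht43 : t4 (3 : Fin 10) = 3 := by decide
    rw [ht23] at d2; rw [ht43] at d4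
    have h3cases := key3 _ d2 d4
    have hg5 : g 5 = t3 (g 3) := by
      have := e3 3
      have ht : t3 (3 : Fin 10) = 5 := by decide
      rw [ht] at this; rw [← this]
    have hg6 : g 6 = t1 (g 3) := by
      have := e1 3
      have ht : t1 (3 : Fin 10) = 6 := by decide
      rw [ht] at this; rw [← this]
    have hg7 : g 7 = t2 (g 5) := by
      have := e2 5
      have ht : t2 (5 : Fin 10) = 7 := by decide
      rw [ht] at this; rw [← this]
    have hg8 : g 8 = t1 (g 5) := by
      have := e1 5
      have ht : t1 (5 : Fin 10) = 8 := by decide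
      rw [ht] at this; rw [← this]
    have hg9 : g 9 = t4 (g 5) := by
      have := e4 5
      have ht : t4 (5 : Fin 10) = 9 := by decide
      rw [ht] at this; rw [← this]
    rcases h3cases with h3v | h3v
    · left
      have k5 : g 5 = 5 := by rw [hg5, h3v]; decide
      have k6 : g 6 = 6 := by rw [hg6, h3v]; decide
      have k7 : g 7 = 7 := by rw [hg7, k5]; decide
      have k8 : g 8 = 8 := by rw [hg8, k5]; decide
      have k9 : g 9 = 9 := by rw [hg9, k5]; decide
      have hx : ∀ x : Fin 10, x = 0 ∨ x = 1 ∨ x = 2 ∨ x = 3 ∨ x = 4 ∨ x = 5 ∨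
          x = 6 ∨ x = 7 ∨ x = 8 ∨ x = 9 := by decide
      ext x
      rcases hx x with rfl|rfl|rfl|rfl|rfl|rfl|rfl|rfl|rfl|rfl
      · rw [h0]; decide
      · rw [ha]; decide
      · rw [hb]; decide
      · rw [h3v]; decide
      · rw [hc]; decide
      · rw [k5]; decide
      · rw [k6]; decide
      · rw [k7]; decide
      · rw [k8]; decide
      · rw [k9]; decide
    · right
      have k5 : g 5 = 8 := by rw [hg5, h3v]; decide
      have k6 : g 6 = 3 := by rw [hg6, h3v]; decide
      have k7 : g 7 = 9 := by rw [hg7, k5]; decide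
      have k8 : g 8 = 5 := by rw [hg8, k5]; decide
      have k9 : g 9 = 7 := by rw [hg9, k5]; decide
      have hx : ∀ x : Fin 10, x = 0 ∨ x = 1 ∨ x = 2 ∨ x = 3 ∨ x = 4 ∨ x = 5 ∨
          x = 6 ∨ x = 7 ∨ x = 8 ∨ x = 9 := by decide
      ext x
      rcases hx x with rfl|rfl|rfl|rfl|rfl|rfl|rfl|rfl|rfl|rfl
      · rw [h0]; decide
      · rw [ha]; decide
      · rw [hb]; decide
      · rw [h3v]; decide
      · rw [hc]; decide
      · rw [k5]; decide
      · rw [k6]; decide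
      · rw [k7]; decide
      · rw [k8]; decide
      · rw [k9]; decide
  · intro hg m hm
    simp only [Set.mem_insert_iff, Set.mem_singleton_iff] at hg hm
    rcases hg with rfl | rfl <;> rcases hm with rfl | rfl | rfl | rfl <;> decide
end

section
/- In the symmetric group S₁₀, the subgroup generated by the five permutations (3 5)(6 8)(9 10), (2 3)(4 6)(7 9), (1 2)(6 10)(8 9), (2 4)(3 6)(5 8), (4 7)(6 9)(8 10) has trivial centralizer: the only element of S₁₀ commuting with all five permutations is the identity. -/
open Equiv

private def G1 : Perm (Fin 10) := swap 2 4 * swap 5 7 * swap 8 9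
private def G2 : Perm (Fin 10) := swap 1 2 * swap 3 5 * swap 6 8
private def G3 : Perm (Fin 10) := swap 0 1 * swap 5 9 * swap 7 8
private def G4 : Perm (Fin 10) := swap 1 3 * swap 2 5 * swap 4 7
private def G5 : Perm (Fin 10) := swap 3 6 * swap 5 8 * swap 7 9

/-- In `S₁₀`, the subgroup generated by the images of the Humphries generators
`T₁, T₂, T₃, T₄, T₀` under `φ⁺₂,₁` has trivial centralizer
(elements of `{1,…,10}` are encoded as `0,…,9 : Fin 10`). -/
theorem centralizer_S10_d :
    Subgroup.centralizer
      ((Subgroup.closure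
        ({swap 2 4 * swap 5 7 * swap 8 9,
          swap 1 2 * swap 3 5 * swap 6 8,
          swap 0 1 * swap 5 9 * swap 7 8,
          swap 1 3 * swap 2 5 * swap 4 7,
          swap 3 6 * swap 5 8 * swap 7 9} : Set (Equiv.Perm (Fin 10)))
        : Subgroup (Equiv.Perm (Fin 10))) : Set (Equiv.Perm (Fin 10))) = ⊥ := by
  rw [eq_bot_iff]
  intro x hx
  rw [Subgroup.mem_centralizer_iff] at hx
  have c1 : ∀ n, x (G1 n) = G1 (x n) := by
    intro n
    have h := hx G1 (Subgroup.subset_closure (by left; rfl))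
    have := congrArg (fun p : Perm (Fin 10) => p n) h
    simpa [Perm.mul_apply] using this.symm
  have c2 : ∀ n, x (G2 n) = G2 (x n) := by
    intro n
    have h := hx G2 (Subgroup.subset_closure (by right; left; rfl))
    have := congrArg (fun p : Perm (Fin 10) => p n) h
    simpa [Perm.mul_apply] using this.symm
  have c3 : ∀ n, x (G3 n) = G3 (x n) := by
    intro n
    have h := hx G3 (Subgroup.subset_closure (by right; right; left; rfl))
    have := congrArg (fun p : Perm (Fin 10) => p n) h
    simpa [Perm.mul_apply] using this.symm
  have c4 : ∀ n, x (G4 n) = G4 (x n) := by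
    intro n
    have h := hx G4 (Subgroup.subset_closure (by right; right; right; left; rfl))
    have := congrArg (fun p : Perm (Fin 10) => p n) h
    simpa [Perm.mul_apply] using this.symm
  have c5 : ∀ n, x (G5 n) = G5 (x n) := by
    intro n
    have h := hx G5 (Subgroup.subset_closure (by right; right; right; right; rfl))
    have := congrArg (fun p : Perm (Fin 10) => p n) h
    simpa [Perm.mul_apply] using this.symm
  have e0 : x 0 = 0 := by
    have h1 := c1 0
    have h2 := c2 0
    rw [show (G1 0 : Fin 10) = 0 from by decide] at h1
    rw [show (G2 0 : Fin 10) = 0 from by decide] at h2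
    generalize x 0 = a at h1 h2 ⊢
    revert h1 h2; revert a; decide
  have e1 : x 1 = 1 := by
    have h := c3 0; rw [e0] at h
    rw [show (G3 0 : Fin 10) = 1 from by decide] at h
    exact h
  have e2 : x 2 = 2 := by
    have h := c2 1; rw [e1] at h
    rw [show (G2 1 : Fin 10) = 2 from by decide] at h
    exact h
  have e3 : x 3 = 3 := by
    have h := c4 1; rw [e1] at h
    rw [show (G4 1 : Fin 10) = 3 from by decide] at h
    exact h
  have e4 : x 4 = 4 := by
    have h := c1 2; rw [e2] at h
    rw [show (G1 2 : Fin 10) = 4 from by decide] at h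
    exact h
  have e5 : x 5 = 5 := by
    have h := c4 2; rw [e2] at h
    rw [show (G4 2 : Fin 10) = 5 from by decide] at h
    exact h
  have e6 : x 6 = 6 := by
    have h := c5 3; rw [e3] at h
    rw [show (G5 3 : Fin 10) = 6 from by decide] at h
    exact h
  have e7 : x 7 = 7 := by
    have h := c1 5; rw [e5] at h
    rw [show (G1 5 : Fin 10) = 7 from by decide] at h
    exact h
  have e8 : x 8 = 8 := by
    have h := c2 6; rw [e6] at h
    rw [show (G2 6 : Fin 10) = 8 from by decide] at h
    exact h
  have e9 : x 9 = 9 := by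
    have h := c1 8; rw [e8] at h
    rw [show (G1 8 : Fin 10) = 9 from by decide] at h
    exact h
  rw [Subgroup.mem_bot]
  ext n
  fin_cases n <;> simp [e0, e1, e2, e3, e4, e5, e6, e7, e8, e9]
end

section
/- Let τ ∈ S₁₀ be one of the three permutations id, (7 8), (7 8)(9 10). Suppose b ∈ S₁₀ commutes with each of (1 2)·τ, (2 3)·τ and (3 5)·τ, and satisfies the braid relation with each of (5 6)·τ and (4 5)·τ. Then b = (4 6)·τ. -/
open Equiv

lemma key (τ b : Equiv.Perm (Fin 10))
    (hτ2 : ∀ x, τ (τ x) = x)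
    (hlow : ∀ i : Fin 10, (i : ℕ) < 6 → τ i = i)
    (h1 : ∀ x, b (swap 0 1 (τ x)) = swap 0 1 (τ (b x)))
    (h2 : ∀ x, b (swap 1 2 (τ x)) = swap 1 2 (τ (b x)))
    (h3 : ∀ x, b (swap 2 4 (τ x)) = swap 2 4 (τ (b x)))
    (h4 : ∀ x, b (swap 4 5 (τ (b x))) = swap 4 5 (τ (b (swap 4 5 (τ x)))))
    (h5 : ∀ x, b (swap 3 4 (τ (b x))) = swap 3 4 (τ (b (swap 3 4 (τ x))))) :
    b = swap 3 5 * τ := by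
  have htail : ∀ i : Fin 10, 6 ≤ (i : ℕ) → 6 ≤ (τ i : ℕ) := by
    intro i hi
    by_contra h
    have h' := hlow (τ i) (by omega)
    rw [hτ2] at h'
    have : (τ i : ℕ) = (i : ℕ) := congrArg Fin.val h'.symm
    omega
  have hinj : ∀ {x y : Fin 10}, b x = b y → x = y := fun h => b.injective h
  have hfix : ∀ (a c w : Fin 10), (a:ℕ) < 6 → (c:ℕ) < 6 → 6 ≤ (w:ℕ) → swap a c w = w := by
    intro a c w ha hc hw
    exact swap_apply_of_ne_of_ne (Fin.ne_of_val_ne (by omega)) (Fin.ne_of_val_ne (by omega))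
  -- values determined by b 1
  have E0 := h1 1
  have E2 := h2 1
  rw [hlow 1 (by decide)] at E0 E2
  rw [show swap (0:Fin 10) 1 1 = 0 by decide] at E0
  rw [show swap (1:Fin 10) 2 1 = 2 by decide] at E2
  -- E0 : b 0 = swap 0 1 (τ (b 1)), E2 : b 2 = swap 1 2 (τ (b 1))
  have hb1 : b 1 = 1 := by
    obtain ⟨v, hv⟩ : ∃ v, b 1 = v := ⟨_, rfl⟩
    rw [hv] at E0 E2
    by_cases hv6 : 6 ≤ (v : ℕ)
    · exfalso
      have h6 := htail v hv6
      rw [hfix 0 1 (τ v) (by decide) (by decide) h6] at E0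
      rw [hfix 1 2 (τ v) (by decide) (by decide) h6] at E2
      exact absurd (hinj (E0.trans E2.symm)) (by decide)
    · push_neg at hv6
      have hvlow := hlow v hv6
      rw [hvlow] at E0 E2
      interval_cases hval : (v : ℕ)
      · exfalso
        have hv0 : v = 0 := Fin.ext (by simpa using hval)
        subst hv0
        rw [show swap (1:Fin 10) 2 0 = 0 by decide] at E2
        exact absurd (hinj (E2.trans hv.symm)) (by decide)
      · rw [hv, Fin.ext (by simpa using hval : (v:ℕ) = (1:Fin 10).val)]
      · exfalso
        have hv0 : v = 2 := Fin.ext (by simpa using hval)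
        subst hv0
        rw [show swap (0:Fin 10) 1 2 = 2 by decide] at E0
        exact absurd (hinj (E0.trans hv.symm)) (by decide)
      · exfalso
        have hv0 : v = 3 := Fin.ext (by simpa using hval)
        subst hv0
        rw [show swap (0:Fin 10) 1 3 = 3 by decide] at E0
        rw [show swap (1:Fin 10) 2 3 = 3 by decide] at E2
        exact absurd (hinj (E0.trans E2.symm)) (by decide)
      · exfalso
        have hv0 : v = 4 := Fin.ext (by simpa using hval)
        subst hv0
        rw [show swap (0:Fin 10) 1 4 = 4 by decide] at E0
        rw [show swap (1:Fin 10) 2 4 = 4 by decide] at E2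
        exact absurd (hinj (E0.trans E2.symm)) (by decide)
      · exfalso
        have hv0 : v = 5 := Fin.ext (by simpa using hval)
        subst hv0
        rw [show swap (0:Fin 10) 1 5 = 5 by decide] at E0
        rw [show swap (1:Fin 10) 2 5 = 5 by decide] at E2
        exact absurd (hinj (E0.trans E2.symm)) (by decide)
  rw [hb1, hlow 1 (by decide)] at E0 E2
  rw [show swap (0:Fin 10) 1 1 = 0 by decide] at E0
  rw [show swap (1:Fin 10) 2 1 = 2 by decide] at E2
  have hb0 : b 0 = 0 := E0
  have hb2 : b 2 = 2 := E2

  have hb4 : b 4 = 4 := by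
    have E := h3 2
    rw [hlow 2 (by decide), hb2, hlow 2 (by decide)] at E
    rw [show swap (2:Fin 10) 4 2 = 4 by decide] at E
    exact E
  have F1 : b 3 = swap 3 4 (τ (b 3)) := by
    have E := h5 4
    rw [hb4, hlow 4 (by decide)] at E
    rw [show swap (3:Fin 10) 4 4 = 3 by decide] at E
    exact E
  have F2 : b (b 3) = 3 := by
    have E := h5 3
    rw [hlow 3 (by decide)] at E
    rw [show swap (3:Fin 10) 4 3 = 4 by decide, hb4, hlow 4 (by decide)] at E
    rw [show swap (3:Fin 10) 4 4 = 3 by decide] at E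
    rw [← F1] at E
    exact E
  have F3 : b (swap 4 5 (τ (b 3))) = swap 4 5 (τ (b 3)) := by
    have E := h4 3
    rw [hlow 3 (by decide)] at E
    rw [show swap (4:Fin 10) 5 3 = 3 by decide] at E
    exact E
  have hb3 : b 3 = 5 := by
    obtain ⟨a, ha⟩ : ∃ a, b 3 = a := ⟨_, rfl⟩
    rw [ha] at F1 F2 F3
    by_cases ha6 : 6 ≤ (a:ℕ)
    · exfalso
      have h6 := htail a ha6
      rw [hfix 3 4 (τ a) (by decide) (by decide) h6] at F1
      rw [hfix 4 5 (τ a) (by decide) (by decide) h6] at F3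
      rw [← F1] at F3
      have h3a : a = (3:Fin 10) := F3.symm.trans F2
      have := congrArg Fin.val h3a
      simp at this
      omega
    · push_neg at ha6
      have halow := hlow a ha6
      rw [halow] at F1 F3
      interval_cases hval : (a : ℕ)
      · exfalso
        have h0 : a = 0 := Fin.ext (by simpa using hval)
        subst h0
        exact absurd (hb0.symm.trans F2) (by decide)
      · exfalso
        have h0 : a = 1 := Fin.ext (by simpa using hval)
        subst h0
        exact absurd (hb1.symm.trans F2) (by decide)
      · exfalso
        have h0 : a = 2 := Fin.ext (by simpa using hval)
        subst h0
        exact absurd (hb2.symm.trans F2) (by decide)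
      · exfalso
        have h0 : a = 3 := Fin.ext (by simpa using hval)
        subst h0
        rw [show swap (3:Fin 10) 4 3 = 4 by decide] at F1
        exact absurd F1 (by decide)
      · exfalso
        have h0 : a = 4 := Fin.ext (by simpa using hval)
        subst h0
        rw [show swap (3:Fin 10) 4 4 = 3 by decide] at F1
        exact absurd F1 (by decide)
      · have h0 : a = 5 := Fin.ext (by simpa using hval)
        rw [ha, h0]
  have hb5 : b 5 = 3 := by
    rw [hb3] at F2
    exact F2
  have hbt : ∀ x : Fin 10, 6 ≤ (x:ℕ) → 6 ≤ (b x : ℕ) := by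
    intro x hx
    by_contra h
    push_neg at h
    interval_cases hval : ((b x : ℕ))
    · have h0 : b x = b 0 := (Fin.ext (by simpa using hval)).trans hb0.symm
      have := congrArg Fin.val (hinj h0); simp at this; omega
    · have h0 : b x = b 1 := (Fin.ext (by simpa using hval)).trans hb1.symm
      have := congrArg Fin.val (hinj h0); simp at this; omega
    · have h0 : b x = b 2 := (Fin.ext (by simpa using hval)).trans hb2.symm
      have := congrArg Fin.val (hinj h0); simp at this; omega
    · have h0 : b x = b 5 := (Fin.ext (by simpa using hval)).trans hb5.symm
      have := congrArg Fin.val (hinj h0); simp at this; omega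
    · have h0 : b x = b 4 := (Fin.ext (by simpa using hval)).trans hb4.symm
      have := congrArg Fin.val (hinj h0); simp at this; omega
    · have h0 : b x = b 3 := (Fin.ext (by simpa using hval)).trans hb3.symm
      have := congrArg Fin.val (hinj h0); simp at this; omega
  have P : ∀ x : Fin 10, 6 ≤ (x:ℕ) → b (τ x) = τ (b x) := by
    intro x hx
    have E := h1 x
    rw [hfix 0 1 (τ x) (by decide) (by decide) (htail x hx)] at E
    rw [hfix 0 1 (τ (b x)) (by decide) (by decide) (htail _ (hbt x hx))] at E
    exact E
  have Q : ∀ x : Fin 10, 6 ≤ (x:ℕ) → b (b x) = τ (b x) := by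
    intro x hx
    have hbx := hbt x hx
    have E := h4 x
    rw [hfix 4 5 (τ (b x)) (by decide) (by decide) (htail _ hbx)] at E
    rw [hfix 4 5 (τ x) (by decide) (by decide) (htail x hx)] at E
    rw [P x hx] at E
    rw [hτ2 (b x)] at E
    rw [hfix 4 5 (b x) (by decide) (by decide) hbx] at E
    rw [P (b x) hbx] at E
    have := congrArg τ E
    rw [hτ2] at this
    exact this
  have R : ∀ y : Fin 10, 6 ≤ (y:ℕ) → b y = τ y := by
    intro y hy
    obtain ⟨z, hz⟩ : ∃ z, b.symm y = z := ⟨_, rfl⟩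
    have hbz : b z = y := by rw [← hz]; exact b.apply_symm_apply y
    have hz6 : 6 ≤ (z:ℕ) := by
      by_contra h
      push_neg at h
      interval_cases hval : (z:ℕ)
      · have h0 : z = 0 := Fin.ext (by simpa using hval)
        rw [h0, hb0] at hbz
        have := congrArg Fin.val hbz; simp at this; omega
      · have h0 : z = 1 := Fin.ext (by simpa using hval)
        rw [h0, hb1] at hbz
        have := congrArg Fin.val hbz; simp at this; omega
      · have h0 : z = 2 := Fin.ext (by simpa using hval)
        rw [h0, hb2] at hbz
        have := congrArg Fin.val hbz; simp at this; omega
      · have h0 : z = 3 := Fin.ext (by simpa using hval)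
        rw [h0, hb3] at hbz
        have := congrArg Fin.val hbz; simp at this; omega
      · have h0 : z = 4 := Fin.ext (by simpa using hval)
        rw [h0, hb4] at hbz
        have := congrArg Fin.val hbz; simp at this; omega
      · have h0 : z = 5 := Fin.ext (by simpa using hval)
        rw [h0, hb5] at hbz
        have := congrArg Fin.val hbz; simp at this; omega
    have hQ := Q z hz6
    rw [hbz] at hQ
    exact hQ
  ext x
  by_cases hx : 6 ≤ (x:ℕ)
  · rw [Equiv.Perm.mul_apply, R x hx,
      hfix 3 5 (τ x) (by decide) (by decide) (htail x hx)]
  · push_neg at hx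
    rw [Equiv.Perm.mul_apply, hlow x hx]
    interval_cases hval : (x:ℕ)
    · have h0 : x = 0 := Fin.ext (by simpa using hval)
      subst h0; rw [hb0]; decide
    · have h0 : x = 1 := Fin.ext (by simpa using hval)
      subst h0; rw [hb1]; decide
    · have h0 : x = 2 := Fin.ext (by simpa using hval)
      subst h0; rw [hb2]; decide
    · have h0 : x = 3 := Fin.ext (by simpa using hval)
      subst h0; rw [hb3]; decide
    · have h0 : x = 4 := Fin.ext (by simpa using hval)
      subst h0; rw [hb4]; decide
    · have h0 : x = 5 := Fin.ext (by simpa using hval)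
      subst h0; rw [hb5]; decide

/-- Determination of `w′₀` in Subcase 1a of Lemma 4.3: with `τ ∈ {id, (7 8), (7 8)(9 10)}`,
any `b ∈ S₁₀` commuting with `(1 2)τ`, `(2 3)τ` and `(3 5)τ` and satisfying the braid
relation with `(5 6)τ` and `(4 5)τ` equals `(4 6)τ`
(elements of `{1,…,10}` are encoded as `0,…,9 : Fin 10`). -/
theorem w0'_determined :
    ∀ τ ∈ ({1, swap 6 7, swap 6 7 * swap 8 9} : Set (Equiv.Perm (Fin 10))),
    ∀ b : Equiv.Perm (Fin 10),
      b * (swap 0 1 * τ) = (swap 0 1 * τ) * b →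
      b * (swap 1 2 * τ) = (swap 1 2 * τ) * b →
      b * (swap 2 4 * τ) = (swap 2 4 * τ) * b →
      b * (swap 4 5 * τ) * b = (swap 4 5 * τ) * b * (swap 4 5 * τ) →
      b * (swap 3 4 * τ) * b = (swap 3 4 * τ) * b * (swap 3 4 * τ) →
      b = swap 3 5 * τ := by
  intro τ hτ b hc1 hc2 hc3 hd4 hd5
  have h1 : ∀ x, b (swap 0 1 (τ x)) = swap 0 1 (τ (b x)) := fun x => by
    simpa [Equiv.Perm.mul_apply] using Equiv.ext_iff.mp hc1 x
  have h2 : ∀ x, b (swap 1 2 (τ x)) = swap 1 2 (τ (b x)) := fun x => by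
    simpa [Equiv.Perm.mul_apply] using Equiv.ext_iff.mp hc2 x
  have h3 : ∀ x, b (swap 2 4 (τ x)) = swap 2 4 (τ (b x)) := fun x => by
    simpa [Equiv.Perm.mul_apply] using Equiv.ext_iff.mp hc3 x
  have h4 : ∀ x, b (swap 4 5 (τ (b x))) = swap 4 5 (τ (b (swap 4 5 (τ x)))) := fun x => by
    simpa [Equiv.Perm.mul_apply] using Equiv.ext_iff.mp hd4 x
  have h5 : ∀ x, b (swap 3 4 (τ (b x))) = swap 3 4 (τ (b (swap 3 4 (τ x)))) := fun x => by
    simpa [Equiv.Perm.mul_apply] using Equiv.ext_iff.mp hd5 x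
  simp only [Set.mem_insert_iff, Set.mem_singleton_iff] at hτ
  rcases hτ with hτ | hτ | hτ <;> subst hτ <;>
    exact key _ b (by decide) (by decide) h1 h2 h3 h4 h5
end

section
/- There exists a group automorphism α of the symmetric group S₆ such that α((1 2)) = (1 2)(3 5)(4 6), α((2 3)) = (1 3)(2 4)(5 6), α((3 4)) = (1 2)(3 6)(4 5), α((4 5)) = (1 3)(2 5)(4 6) and α((5 6)) = (1 2)(3 4)(5 6); moreover α is not an inner automorphism, i.e., there is no g ∈ S₆ with α(x) = g·x·g⁻¹ for all x ∈ S₆. -/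
open Equiv

set_option maxRecDepth 20000

namespace S6OuterAux

/-- The six pentads: each is a set of five fixed-point-free involutions of `Fin 6`
(perfect matchings of the complete graph `K₆`) that pairwise share no 2-cycle. -/
def P : Fin 6 → Finset (Equiv.Perm (Fin 6)) :=
  ![{swap 0 1 * swap 2 3 * swap 4 5, swap 0 2 * swap 1 4 * swap 3 5,
     swap 0 3 * swap 1 5 * swap 2 4, swap 0 4 * swap 1 3 * swap 2 5,
     swap 0 5 * swap 1 2 * swap 3 4},
    {swap 0 1 * swap 2 3 * swap 4 5, swap 0 2 * swap 1 5 * swap 3 4,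
     swap 0 3 * swap 1 4 * swap 2 5, swap 0 4 * swap 1 2 * swap 3 5,
     swap 0 5 * swap 1 3 * swap 2 4},
    {swap 0 1 * swap 2 4 * swap 3 5, swap 0 2 * swap 1 3 * swap 4 5,
     swap 0 3 * swap 1 4 * swap 2 5, swap 0 4 * swap 1 5 * swap 2 3,
     swap 0 5 * swap 1 2 * swap 3 4},
    {swap 0 1 * swap 2 5 * swap 3 4, swap 0 2 * swap 1 3 * swap 4 5,
     swap 0 3 * swap 1 5 * swap 2 4, swap 0 4 * swap 1 2 * swap 3 5,
     swap 0 5 * swap 1 4 * swap 2 3},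
    {swap 0 1 * swap 2 4 * swap 3 5, swap 0 2 * swap 1 5 * swap 3 4,
     swap 0 3 * swap 1 2 * swap 4 5, swap 0 4 * swap 1 3 * swap 2 5,
     swap 0 5 * swap 1 4 * swap 2 3},
    {swap 0 1 * swap 2 5 * swap 3 4, swap 0 2 * swap 1 4 * swap 3 5,
     swap 0 3 * swap 1 2 * swap 4 5, swap 0 4 * swap 1 5 * swap 2 3,
     swap 0 5 * swap 1 3 * swap 2 4}]

/-- Conjugation action on finite sets of permutations. -/
def conjP (σ : Equiv.Perm (Fin 6)) (x : Finset (Equiv.Perm (Fin 6))) :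
    Finset (Equiv.Perm (Fin 6)) :=
  x.image fun m => σ * m * σ⁻¹

lemma conjP_mul (σ τ : Equiv.Perm (Fin 6)) (x : Finset (Equiv.Perm (Fin 6))) :
    conjP (σ * τ) x = conjP σ (conjP τ x) := by
  simp only [conjP, Finset.image_image]
  apply Finset.image_congr
  intro m _
  simp [mul_assoc]

lemma conjP_one (x : Finset (Equiv.Perm (Fin 6))) : conjP 1 x = x := by
  simp [conjP]

/-- `σ` permutes the six pentads. -/
def K (σ : Equiv.Perm (Fin 6)) : Prop :=
  ∃ e : Equiv.Perm (Fin 6), ∀ i, conjP σ (P i) = P (e i)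

lemma K_one : K 1 := ⟨1, fun i => by simp [conjP_one]⟩

lemma K_mul {σ τ : Equiv.Perm (Fin 6)} (hσ : K σ) (hτ : K τ) : K (σ * τ) := by
  obtain ⟨e, he⟩ := hσ
  obtain ⟨f, hf⟩ := hτ
  exact ⟨e * f, fun i => by rw [conjP_mul, hf, he]; rfl⟩

lemma K_inv {σ : Equiv.Perm (Fin 6)} (hσ : K σ) : K σ⁻¹ := by
  obtain ⟨e, he⟩ := hσ
  refine ⟨e⁻¹, fun i => ?_⟩
  have := he (e⁻¹ i)
  have h2 : conjP σ⁻¹ (conjP σ (P (e⁻¹ i))) = conjP σ⁻¹ (P i) := by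
    rw [this]; simp
  rw [← conjP_mul, inv_mul_cancel, conjP_one] at h2
  exact h2.symm

lemma K_rot : K (finRotate 6) :=
  ⟨swap 1 2 * swap 3 5 * swap 4 5, by decide⟩

lemma K_swap01 : K (swap 0 1) :=
  ⟨swap 0 1 * swap 2 4 * swap 3 5, by decide⟩

lemma K_all : ∀ σ : Equiv.Perm (Fin 6), K σ := by
  intro σ
  have hc : Subgroup.closure {finRotate 6, swap (0 : Fin 6) (finRotate 6 0)} = ⊤ :=
    Equiv.Perm.closure_cycle_adjacent_swap isCycle_finRotate support_finRotate 0
  have hσ : σ ∈ Subgroup.closure {finRotate 6, swap (0 : Fin 6) (finRotate 6 0)} := by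
    rw [hc]; trivial
  have h01 : (finRotate 6 : Equiv.Perm (Fin 6)) 0 = 1 := by decide
  refine Subgroup.closure_induction ?_ K_one (fun x y _ _ => K_mul) (fun x _ => K_inv) hσ
  intro x hx
  rcases hx with h | h
  · rw [h]; exact K_rot
  · rw [Set.mem_singleton_iff] at h
    rw [h, h01]; exact K_swap01

lemma P_inj : Function.Injective P := by decide

/-- The permutation of pentad labels induced by conjugation by `σ`. -/
noncomputable def E (σ : Equiv.Perm (Fin 6)) : Equiv.Perm (Fin 6) :=
  (K_all σ).choose

lemma E_spec (σ : Equiv.Perm (Fin 6)) : ∀ i, conjP σ (P i) = P (E σ i) :=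
  (K_all σ).choose_spec

lemma E_eq {σ e : Equiv.Perm (Fin 6)} (h : ∀ i, conjP σ (P i) = P (e i)) :
    E σ = e := by
  ext i
  exact congrArg _ (P_inj ((E_spec σ i).symm.trans (h i)))

/-- The pentad-action homomorphism `S₆ →* S₆`. -/
noncomputable def F : Equiv.Perm (Fin 6) →* Equiv.Perm (Fin 6) where
  toFun := E
  map_one' := E_eq fun i => by simp [conjP_one]
  map_mul' σ τ := E_eq fun i => by
    rw [conjP_mul, E_spec τ, E_spec σ]; rfl

lemma F_s0 : F (swap 0 1) = swap 0 1 * swap 2 4 * swap 3 5 := E_eq (by decide)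
lemma F_s1 : F (swap 1 2) = swap 0 2 * swap 1 3 * swap 4 5 := E_eq (by decide)
lemma F_s2 : F (swap 2 3) = swap 0 1 * swap 2 5 * swap 3 4 := E_eq (by decide)
lemma F_s3 : F (swap 3 4) = swap 0 2 * swap 1 4 * swap 3 5 := E_eq (by decide)
lemma F_s4 : F (swap 4 5) = swap 0 1 * swap 2 3 * swap 4 5 := E_eq (by decide)

lemma F_surjective : Function.Surjective F := by
  set T : Set (Equiv.Perm (Fin 6)) :=
    {swap 0 1 * swap 2 4 * swap 3 5, swap 0 2 * swap 1 3 * swap 4 5,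
     swap 0 1 * swap 2 5 * swap 3 4, swap 0 2 * swap 1 4 * swap 3 5,
     swap 0 1 * swap 2 3 * swap 4 5} with hT
  have hTr : T ⊆ Set.range F := by
    rintro x (h | h | h | h | h) <;> subst h
    · exact ⟨_, F_s0⟩
    · exact ⟨_, F_s1⟩
    · exact ⟨_, F_s2⟩
    · exact ⟨_, F_s3⟩
    · exact ⟨_, F_s4⟩
  have hTc : ∀ x ∈ T, x ∈ F.range := fun x hx => hTr hx
  have hmem : ∀ x ∈ Subgroup.closure T, x ∈ F.range := by
    intro x hx
    exact (Subgroup.closure_le F.range).2 hTc hx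
  -- the cycle and adjacent swap lie in the closure of T
  have t0 : (swap 0 1 * swap 2 4 * swap 3 5 : Equiv.Perm (Fin 6)) ∈ Subgroup.closure T :=
    Subgroup.subset_closure (by simp [hT])
  have t1 : (swap 0 2 * swap 1 3 * swap 4 5 : Equiv.Perm (Fin 6)) ∈ Subgroup.closure T :=
    Subgroup.subset_closure (by simp [hT])
  have t2 : (swap 0 1 * swap 2 5 * swap 3 4 : Equiv.Perm (Fin 6)) ∈ Subgroup.closure T :=
    Subgroup.subset_closure (by simp [hT])
  have t3 : (swap 0 2 * swap 1 4 * swap 3 5 : Equiv.Perm (Fin 6)) ∈ Subgroup.closure T :=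
    Subgroup.subset_closure (by simp [hT])
  have t4 : (swap 0 1 * swap 2 3 * swap 4 5 : Equiv.Perm (Fin 6)) ∈ Subgroup.closure T :=
    Subgroup.subset_closure (by simp [hT])
  have hswap : (swap 0 1 : Equiv.Perm (Fin 6)) ∈ Subgroup.closure T := by
    have : (swap 0 1 : Equiv.Perm (Fin 6)) =
        (swap 0 1 * swap 2 4 * swap 3 5) * (swap 0 1 * swap 2 5 * swap 3 4) *
        (swap 0 1 * swap 2 3 * swap 4 5) := by decide
    rw [this]
    exact mul_mem (mul_mem t0 t2) t4
  have hrot : (finRotate 6 : Equiv.Perm (Fin 6)) ∈ Subgroup.closure T := by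
    have : (finRotate 6 : Equiv.Perm (Fin 6)) =
        (swap 0 2 * swap 1 3 * swap 4 5) * (swap 0 1 * swap 2 4 * swap 3 5) *
        (swap 0 1 * swap 2 5 * swap 3 4) * (swap 0 2 * swap 1 3 * swap 4 5) *
        (swap 0 2 * swap 1 4 * swap 3 5) * (swap 0 1 * swap 2 3 * swap 4 5) *
        (swap 0 2 * swap 1 4 * swap 3 5) * (swap 0 1 * swap 2 5 * swap 3 4) *
        (swap 0 2 * swap 1 3 * swap 4 5) := by decide
    rw [this]
    exact mul_mem (mul_mem (mul_mem (mul_mem (mul_mem (mul_mem (mul_mem (mul_mem t1 t0) t2) t1)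
      t3) t4) t3) t2) t1
  have hc : Subgroup.closure {finRotate 6, swap (0 : Fin 6) (finRotate 6 0)} = ⊤ :=
    Equiv.Perm.closure_cycle_adjacent_swap isCycle_finRotate support_finRotate 0
  have h01 : (finRotate 6 : Equiv.Perm (Fin 6)) 0 = 1 := by decide
  intro y
  have hy : y ∈ Subgroup.closure {finRotate 6, swap (0 : Fin 6) (finRotate 6 0)} := by
    rw [hc]; trivial
  have hy2 : y ∈ Subgroup.closure T := by
    refine (Subgroup.closure_le _).2 ?_ hy
    rintro x (h | h)
    · rw [h]; exact hrot
    · rw [Set.mem_singleton_iff] at h; rw [h, h01]; exact hswap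
  exact hmem y hy2

lemma F_bijective : Function.Bijective F :=
  ⟨Finite.injective_iff_surjective.2 F_surjective, F_surjective⟩

/-- The outer automorphism. -/
noncomputable def A : Equiv.Perm (Fin 6) ≃* Equiv.Perm (Fin 6) :=
  MulEquiv.ofBijective F F_bijective

lemma A_apply (σ : Equiv.Perm (Fin 6)) : A σ = F σ := rfl

end S6OuterAux

/-- There is an automorphism `α` of `S₆` sending `(1 2) ↦ (1 2)(3 5)(4 6)`,
`(2 3) ↦ (1 3)(2 4)(5 6)`, `(3 4) ↦ (1 2)(3 6)(4 5)`, `(4 5) ↦ (1 3)(2 5)(4 6)`,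
`(5 6) ↦ (1 2)(3 4)(5 6)`, and `α` is not inner
(elements of `{1,…,6}` are encoded as `0,…,5 : Fin 6`). -/
theorem exists_noninner_automorphism_S6 :
    ∃ α : Equiv.Perm (Fin 6) ≃* Equiv.Perm (Fin 6),
      α (swap 0 1) = swap 0 1 * swap 2 4 * swap 3 5 ∧
      α (swap 1 2) = swap 0 2 * swap 1 3 * swap 4 5 ∧
      α (swap 2 3) = swap 0 1 * swap 2 5 * swap 3 4 ∧
      α (swap 3 4) = swap 0 2 * swap 1 4 * swap 3 5 ∧
      α (swap 4 5) = swap 0 1 * swap 2 3 * swap 4 5 ∧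
      ¬ ∃ g : Equiv.Perm (Fin 6), ∀ x : Equiv.Perm (Fin 6), α x = g * x * g⁻¹ := by
  refine ⟨S6OuterAux.A, ?_, ?_, ?_, ?_, ?_, ?_⟩
  · exact S6OuterAux.F_s0
  · exact S6OuterAux.F_s1
  · exact S6OuterAux.F_s2
  · exact S6OuterAux.F_s3
  · exact S6OuterAux.F_s4
  · rintro ⟨g, hg⟩
    have h1 := hg (swap 0 1)
    rw [S6OuterAux.A_apply, S6OuterAux.F_s0] at h1
    have h2 : (g * swap 0 1 * g⁻¹ : Equiv.Perm (Fin 6)).support.card =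
        (swap 0 1 : Equiv.Perm (Fin 6)).support.card :=
      Equiv.Perm.card_support_conj
    rw [← h1] at h2
    have h3 : (swap 0 1 * swap 2 4 * swap 3 5 : Equiv.Perm (Fin 6)).support.card = 6 := by
      decide
    have h4 : (swap 0 1 : Equiv.Perm (Fin 6)).support.card = 2 := by decide
    omega
end
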